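/- With I_λ as in the constrained minimization problem, for all λ > 0 and m > 1 one has I_{mλ} < m · I_λ. -/

import Mathlib

/-! Scaling `(f, g) ↦ (c f, c g)` multiplies the cubic constraint by `c³` and the quadratic
energy `K` by `c²`. Taking `c = m^{1/3} > 1` gives `I_{mλ} ≤ m^{2/3} I_λ < m I_λ`, the last
step because `I_λ > 0`. -/

open MeasureTheory

/-- Membership in the Sobolev space `H¹(ℝ)` (for differentiable representatives). -/
def H1 (f : ℝ → ℝ) : Prop :=
  Differentiable ℝ f ∧ MemLp f 2 (volume : Measure ℝ) ∧
    MemLp (deriv f) 2 (volume : Measure ℝ)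

/-- The constraint set `A_λ`, encoded via the values of the functional `K` on it. -/
def Kvalues (N : ℕ) (σ γ cτ β : ℝ) (α : Fin N → ℝ) (lam : ℝ) : Set ℝ :=
  { k : ℝ |
    ∃ f : Fin N → ℝ → ℝ, ∃ g : ℝ → ℝ,
      (∀ j, H1 (f j)) ∧ H1 g ∧
      (∫ x : ℝ, (β / 3 * g x ^ 3 + (∑ j, α j * f j x ^ 2) * g x)) = lam ∧
      k = (∑ j, ∫ x : ℝ, (deriv (f j) x ^ 2 + σ * f j x ^ 2))
          + ∫ x : ℝ, (γ * deriv g x ^ 2 + cτ * g x ^ 2) }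

/-- The infimum `I_λ` of `K` over the constraint set. -/
noncomputable def Ifun (N : ℕ) (σ γ cτ β : ℝ) (α : Fin N → ℝ) (lam : ℝ) : ℝ :=
  sInf (Kvalues N σ γ cτ β α lam)

lemma H1.const_mul {f : ℝ → ℝ} (hf : H1 f) (c : ℝ) : H1 (fun x => c * f x) := by
  obtain ⟨hd, hf2, hf'2⟩ := hf
  refine ⟨hd.const_mul c, hf2.const_mul c, ?_⟩
  rw [deriv_const_mul_field']
  exact hf'2.const_mul c

open scoped Pointwise

section Kvalues

variable {N : ℕ} {σ γ cτ β : ℝ} {α : Fin N → ℝ}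

lemma Kvalues_nonneg (hσ : 0 < σ) (hγ : 0 < γ) (hc : 0 < cτ) {lam k : ℝ}
    (hk : k ∈ Kvalues N σ γ cτ β α lam) : 0 ≤ k := by
  obtain ⟨f, g, -, -, -, rfl⟩ := hk
  refine add_nonneg (Finset.sum_nonneg fun j _ => integral_nonneg fun x => ?_)
    (integral_nonneg fun x => ?_) <;> positivity

lemma sq_mul_mem_Kvalues (c : ℝ) {lam k : ℝ} (hk : k ∈ Kvalues N σ γ cτ β α lam) :
    c ^ 2 * k ∈ Kvalues N σ γ cτ β α (c ^ 3 * lam) := by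
  obtain ⟨f, g, hf, hg, rfl, rfl⟩ := hk
  refine ⟨fun j x => c * f j x, fun x => c * g x, fun j => (hf j).const_mul c, hg.const_mul c,
    ?_, ?_⟩
  · have hcubic : ∀ x, β / 3 * (c * g x) ^ 3 + (∑ j, α j * (c * f j x) ^ 2) * (c * g x)
        = c ^ 3 * (β / 3 * g x ^ 3 + (∑ j, α j * f j x ^ 2) * g x) := fun x => by
      have hsum : ∑ j, α j * (c * f j x) ^ 2 = c ^ 2 * ∑ j, α j * f j x ^ 2 := by
        rw [Finset.mul_sum]
        exact Finset.sum_congr rfl fun j _ => by ring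
      rw [hsum]
      ring
    simp only [hcubic, integral_const_mul]
  · have hquad_f : ∀ j, ∫ x, deriv (fun x => c * f j x) x ^ 2 + σ * (c * f j x) ^ 2
        = c ^ 2 * ∫ x, deriv (f j) x ^ 2 + σ * f j x ^ 2 := fun j => by
      rw [deriv_const_mul_field', ← integral_const_mul]
      congr 1; ext x; ring
    have hquad_g : ∫ x, γ * deriv (fun x => c * g x) x ^ 2 + cτ * (c * g x) ^ 2
        = c ^ 2 * ∫ x, γ * deriv g x ^ 2 + cτ * g x ^ 2 := by
      rw [deriv_const_mul_field', ← integral_const_mul]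
      congr 1; ext x; ring
    simp only [hquad_f, hquad_g, ← Finset.mul_sum, mul_add]

lemma Ifun_cube_mul_le (hσ : 0 < σ) (hγ : 0 < γ) (hc : 0 < cτ) {lam : ℝ}
    (hne : (Kvalues N σ γ cτ β α lam).Nonempty) (c : ℝ) :
    Ifun N σ γ cτ β α (c ^ 3 * lam) ≤ c ^ 2 * Ifun N σ γ cτ β α lam := by
  have hsub : c ^ 2 • Kvalues N σ γ cτ β α lam ⊆ Kvalues N σ γ cτ β α (c ^ 3 * lam) := by
    rintro _ ⟨k, hk, rfl⟩
    exact sq_mul_mem_Kvalues c hk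
  calc Ifun N σ γ cτ β α (c ^ 3 * lam)
      ≤ sInf (c ^ 2 • Kvalues N σ γ cτ β α lam) :=
        csInf_le_csInf ⟨0, fun _ hk => Kvalues_nonneg hσ hγ hc hk⟩ (hne.smul_set) hsub
    _ = c ^ 2 * Ifun N σ γ cτ β α lam := Real.sInf_smul_of_nonneg (sq_nonneg c) _

end Kvalues

theorem stmt_5_general (N : ℕ) (σ γ cτ β : ℝ) (α : Fin N → ℝ)
    (hσ : 0 < σ) (hγ : 0 < γ) (hc : 0 < cτ)
    (hne : ∀ lam : ℝ, 0 < lam → (Kvalues N σ γ cτ β α lam).Nonempty)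
    (hpos : ∀ lam : ℝ, 0 < lam → 0 < Ifun N σ γ cτ β α lam)
    (lam m : ℝ) (hlam : 0 < lam) (hm : 1 < m) :
    Ifun N σ γ cτ β α (m * lam) < m * Ifun N σ γ cτ β α lam := by
  set c := m ^ ((3 : ℕ) : ℝ)⁻¹
  have hc3 : c ^ 3 = m := Real.rpow_inv_natCast_pow (by linarith) three_ne_zero
  have hc1 : 1 < c := Real.one_lt_rpow hm (by norm_num)
  have hc2 : c ^ 2 < c ^ 3 := pow_lt_pow_right₀ hc1 (by norm_num)
  calc Ifun N σ γ cτ β α (m * lam)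
      ≤ c ^ 2 * Ifun N σ γ cτ β α lam := hc3 ▸ Ifun_cube_mul_le hσ hγ hc (hne lam hlam) c
    _ < m * Ifun N σ γ cτ β α lam := hc3 ▸ mul_lt_mul_of_pos_right hc2 (hpos lam hlam)

theorem stmt_5 (N : ℕ) (σ γ cτ β : ℝ) (α : Fin N → ℝ)
    (hσ : 0 < σ) (hγ : 0 < γ) (hc : 0 < cτ) (hβ : 0 ≤ β) (hα : ∀ j, 0 < α j)
    (hne : ∀ lam : ℝ, 0 < lam → (Kvalues N σ γ cτ β α lam).Nonempty)
    (hpos : ∀ lam : ℝ, 0 < lam → 0 < Ifun N σ γ cτ β α lam)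
    (lam m : ℝ) (hlam : 0 < lam) (hm : 1 < m) :
    Ifun N σ γ cτ β α (m * lam) < m * Ifun N σ γ cτ β α lam :=
  stmt_5_general N σ γ cτ β α hσ hγ hc hne hpos lam m hlam hm
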